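/- Let x_1,…,x_K ∈ ℝ^N and let G : ℝ^N → ℝ^N satisfy the min-descent assumption for x_1,…,x_K. Fix j ≤ N and let δ_j(t) = min_{k≤K} Σ_{i≤N} [t_j − x_{kj} − t_i + x_{ki}]^+. Let t ∈ ℝ^N, a ≥ 0, and t' = t + a·d where d_i = 1 if G(t)_i < 0 and d_i = 0 otherwise. If δ_j(t) > 0, then δ_j(t') ≤ δ_j(t). -/
import Mathlib


/-- `δ_j(t) = min_{k ≤ K} Σ_{i ≤ N} [t_j − x_{k j} − t_i + x_{k i}]⁺`. -/
noncomputable def deltaF {N K : ℕ} [NeZero K] (x : Fin K → Fin N → ℝ)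
    (j : Fin N) (t : Fin N → ℝ) : ℝ :=
  Finset.univ.inf' Finset.univ_nonempty
    (fun k => ∑ i, max (t j - x k j - t i + x k i) 0)

/-- Along a tropical descent step, `δ_j` does not increase whenever it is positive:
if `δ_j(t) > 0` and `t' = t + a·d` with `d_i = 1` when `G(t)_i < 0` and `d_i = 0`
otherwise, for `G` satisfying the min-descent assumption and `a ≥ 0`,
then `δ_j(t') ≤ δ_j(t)`. -/
theorem stmt9 {N K : ℕ} [NeZero N] [NeZero K] (x : Fin K → Fin N → ℝ)
    (G : (Fin N → ℝ) → (Fin N → ℝ))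
    (hG : ∀ t j, G t j < 0 → ∃ k, t j - x k j =
      Finset.univ.inf' Finset.univ_nonempty (fun i => t i - x k i))
    (j : Fin N) (t : Fin N → ℝ) (a : ℝ) (haa : 0 ≤ a)
    (t' : Fin N → ℝ)
    (ht' : t' = t + a • (fun i => if G t i < 0 then (1 : ℝ) else 0))
    (hpos : 0 < deltaF x j t) :
    deltaF x j t' ≤ deltaF x j t := by
  by_cases hj : G t j < 0
  · exfalso
    obtain ⟨k, hk⟩ := hG t j hj
    have hle : deltaF x j t ≤ 0 := by
      refine le_trans (Finset.inf'_le _ (Finset.mem_univ k)) ?_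
      have : ∀ i : Fin N, max (t j - x k j - t i + x k i) 0 = 0 := by
        intro i
        have h1 : t j - x k j ≤ t i - x k i := by
          rw [hk]
          exact Finset.inf'_le _ (Finset.mem_univ i)
        simp only [max_eq_right_iff]
        linarith
      simp [this]
    linarith
  · have hd : ∀ i : Fin N, t i ≤ t' i := by
      intro i
      rw [ht']
      simp only [Pi.add_apply, Pi.smul_apply, smul_eq_mul]
      by_cases h : G t i < 0 <;> simp [h] <;> linarith
    have hjj : t' j = t j := by
      rw [ht']
      simp [hj]
    unfold deltaF
    obtain ⟨k, _, hk⟩ := Finset.exists_mem_eq_inf' (Finset.univ_nonempty (α := Fin K))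
      (fun k => ∑ i, max (t j - x k j - t i + x k i) 0)
    rw [hk]
    refine le_trans (Finset.inf'_le _ (Finset.mem_univ k)) ?_
    refine Finset.sum_le_sum fun i _ => ?_
    have := hd i
    exact max_le_max (by rw [hjj]; linarith) le_rfl
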